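/- Let τ belong to class 𝒯 and let 𝒫^{(n)} = {(a_i^{(n)}, b_i^{(n)})}_{i=1}^∞ be the partition of [0,1] into branch intervals of τ^n. Then for every ε > 0 there exists n̄ ∈ ℕ such that for all n > n̄, sup_i (b_i^{(n)} − a_i^{(n)}) < ε. -/

import Mathlib

open Set Filter MeasureTheory Topology

structure PCT where
  τ : ℝ → ℝ
  a : ℕ → ℝ
  b : ℕ → ℝ
  da : ℕ → ℝ
  maps_to : Set.MapsTo τ (Set.Icc 0 1) (Set.Icc 0 1)
  lt : ∀ i, a i < b i
  sub : ∀ i, Set.Ioo (a i) (b i) ⊆ Set.Icc (0:ℝ) 1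
  disj : Pairwise (Function.onFun Disjoint fun i => Set.Ioo (a i) (b i))
  null : volume (Set.Icc (0:ℝ) 1 \ ⋃ i, Set.Ioo (a i) (b i)) = 0
  mono : ∀ i, StrictMonoOn τ (Set.Ioo (a i) (b i))
  conv : ∀ i, ConvexOn ℝ (Set.Ioo (a i) (b i)) τ
  diff : ∀ i, ∀ x ∈ Set.Ioo (a i) (b i), DifferentiableAt ℝ τ x
  lim_zero : ∀ i, Filter.Tendsto τ (nhdsWithin (a i) (Set.Ioi (a i))) (nhds 0)
  deriv_lim : ∀ i, Filter.Tendsto (deriv τ) (nhdsWithin (a i) (Set.Ioi (a i))) (nhds (da i))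
  da_pos : ∀ i, 0 < da i
  sum_inv : Summable (fun i => 1 / da i)
  expand : (¬ AccPt (0:ℝ) (Filter.principal (Set.range a))) → ∃ i, a i = 0 ∧ 1 < da i

/-- The interval `(c,d)` follows a single sequence of branches under the first `n`
iterates of `τ`. -/
def IsBranchSeq (T : PCT) (n : ℕ) (c d : ℝ) : Prop :=
  c < d ∧ ∀ k < n, ∃ i, T.τ^[k] '' Set.Ioo c d ⊆ Set.Ioo (T.a i) (T.b i)

/-- `(c,d)` is a maximal open interval on which `τ^n` is a single monotone branch,
i.e. an element of the partition `𝒫⁽ⁿ⁾`. -/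
def IsBranchInterval (T : PCT) (n : ℕ) (c d : ℝ) : Prop :=
  IsBranchSeq T n c d ∧
    ∀ c' d', c' ≤ c → d ≤ d' → IsBranchSeq T n c' d' → c' = c ∧ d' = d

/-! On a branch `(aᵢ, bᵢ)` the slope of a chord `[x, y]` is at least `τ'(aᵢ)`, and, by convexity
and `τ(aᵢ⁺) = 0`, at least `τ y / (y - aᵢ)`. Summability of `1 / τ'(aᵢ)` leaves only finitely many
branches with `τ'(aᵢ)` close to `1`, and condition (2.3) keeps all of them away from `0`, so on
them `τ y / (y - aᵢ) ≥ κ τ y / y` with a fixed `κ > 1`. Interpolating the two bounds, the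
potential `(y - x)^(N+1) / y^N` of a pair `x < y` in one branch is multiplied by at least a fixed
`ν > 1` under `τ`. Along a branch interval of `τⁿ` it therefore grows like `νⁿ`, while it is
at most `1` for pairs in `[0, 1]`; hence the interval has length `O(ν^(-n/(N+1)))`. -/

noncomputable def gapPotential (N : ℕ) (x y : ℝ) : ℝ :=
  (y - x) ^ (N + 1) / y ^ N

lemma pow_le_gapPotential (N : ℕ) {x y : ℝ} (hx : 0 ≤ x) (hxy : x < y) (hy : y ≤ 1) :
    (y - x) ^ (N + 1) ≤ gapPotential N x y := by
  have hy0 : 0 < y ^ N := pow_pos (by linarith) N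
  rw [gapPotential, le_div_iff₀ hy0]
  exact mul_le_of_le_one_right (by positivity) (pow_le_one₀ (by linarith) hy)

lemma gapPotential_le_one (N : ℕ) {x y : ℝ} (hx : 0 ≤ x) (hxy : x < y) (hy : y ≤ 1) :
    gapPotential N x y ≤ 1 := by
  have hy0 : 0 < y ^ N := pow_pos (by linarith) N
  rw [gapPotential, div_le_one hy0, pow_succ]
  calc (y - x) ^ N * (y - x) ≤ y ^ N * 1 := by
        gcongr <;> linarith
    _ = y ^ N := mul_one _

lemma mul_gapPotential_le_of_slope {f : ℝ → ℝ} {ν x y : ℝ} (N : ℕ) (hxy : x < y) (hy : 0 < y)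
    (hfy : 0 < f y) (h : ν * (f y / y) ^ N ≤ slope f x y ^ (N + 1)) :
    ν * gapPotential N x y ≤ gapPotential N (f x) (f y) := by
  have hgap : f y - f x = slope f x y * (y - x) := by
    rw [slope_def_field, div_mul_cancel₀ _ (sub_ne_zero.2 hxy.ne')]
  calc ν * gapPotential N x y
        = ν * (f y / y) ^ N * (y - x) ^ (N + 1) / ((f y / y) ^ N * y ^ N) := by
        rw [gapPotential]; field_simp
    _ ≤ slope f x y ^ (N + 1) * (y - x) ^ (N + 1) / ((f y / y) ^ N * y ^ N) := by gcongr
    _ = gapPotential N (f x) (f y) := by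
        rw [gapPotential, hgap, ← mul_pow (f y / y), div_mul_cancel₀ _ hy.ne', mul_pow]

namespace PCT

variable (T : PCT) {i : ℕ} {x y z : ℝ}

lemma a_nonneg (i : ℕ) : 0 ≤ T.a i := by
  by_contra! h
  obtain ⟨x, hx⟩ := nonempty_Ioo.2 (lt_min (T.lt i) h)
  have := (T.sub i ⟨hx.1, hx.2.trans_le (min_le_left _ _)⟩).1
  linarith [hx.2.trans_le (min_le_right _ _)]

lemma a_notMem_Ico {i j : ℕ} (hij : i ≠ j) : T.a j ∉ Ico (T.a i) (T.b i) := by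
  rintro ⟨hij₁, hij₂⟩
  obtain ⟨x, hx⟩ := nonempty_Ioo.2 (lt_min hij₂ (T.lt j))
  exact disjoint_left.1 (T.disj hij) ⟨hij₁.trans_lt hx.1, hx.2.trans_le (min_le_left _ _)⟩
    ⟨hx.1, hx.2.trans_le (min_le_right _ _)⟩

lemma a_injective : Function.Injective T.a := by
  intro i j hij
  by_contra hne
  exact T.a_notMem_Ico hne ⟨hij.le, hij ▸ T.lt i⟩

lemma a_ne_zero_of_accPt (hacc : AccPt (0 : ℝ) (𝓟 (range T.a))) (i : ℕ) : T.a i ≠ 0 := by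
  intro hi
  obtain ⟨_, ⟨hy, j, rfl⟩, hj⟩ :=
    accPt_iff_nhds.1 hacc _ (Ioo_mem_nhds (neg_lt_zero.2 (hi ▸ T.lt i)) (hi ▸ T.lt i))
  have hji : i ≠ j := by rintro rfl; exact hj hi
  exact T.a_notMem_Ico hji ⟨hi ▸ T.a_nonneg j, hy.2⟩

lemma tendsto_da_atTop : Tendsto T.da cofinite atTop := by
  have h : Tendsto (fun i => (T.da i)⁻¹) cofinite (𝓝[>] 0) :=
    tendsto_nhdsWithin_iff.2 ⟨by simpa only [one_div] using T.sum_inv.tendsto_cofinite_zero,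
      Eventually.of_forall fun i => inv_pos.2 (T.da_pos i)⟩
  simpa only [Pi.inv_def, inv_inv] using h.inv_tendsto_nhdsGT_zero

lemma exists_one_lt_le_da_of_a_eq_zero : ∃ el > 1, ∀ i, T.a i = 0 → el ≤ T.da i := by
  by_cases hacc : AccPt (0 : ℝ) (𝓟 (range T.a))
  · exact ⟨2, one_lt_two, fun i hi => absurd hi (T.a_ne_zero_of_accPt hacc i)⟩
  · obtain ⟨i₀, hi₀, hda⟩ := T.expand hacc
    exact ⟨T.da i₀, hda, fun i hi => (T.a_injective (hi.trans hi₀.symm)) ▸ le_rfl⟩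

lemma exists_le_a_of_da_lt :
    ∃ el > 1, ∃ m > 0, m < 1 ∧ ∀ i, T.da i < el → m ≤ T.a i := by
  obtain ⟨el, hel, hzero⟩ := T.exists_one_lt_le_da_of_a_eq_zero
  have hfin : {i | T.da i < el}.Finite := by
    simpa only [not_le] using eventually_cofinite.1 (T.tendsto_da_atTop.eventually_ge_atTop el)
  have hpos : ∀ i ∈ {i | T.da i < el}, 0 < T.a i := fun i hi =>
    (T.a_nonneg i).lt_of_ne' fun h => (hzero i h).not_gt hi
  have hsmall : ∀ᶠ m in 𝓝[>] (0 : ℝ), 0 < m ∧ m < 1 ∧ ∀ i ∈ {i | T.da i < el}, m ≤ T.a i :=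
    (eventually_mem_nhdsWithin (a := (0 : ℝ)) (s := Ioi 0)).and <|
      ((eventually_lt_nhds one_pos).filter_mono nhdsWithin_le_nhds).and <|
      hfin.eventually_all.2 fun i hi =>
        (eventually_le_nhds (hpos i hi)).filter_mono nhdsWithin_le_nhds
  obtain ⟨m, hm0, hm1, hm⟩ := hsmall.exists
  exact ⟨el, hel, m, hm0, hm1, hm⟩

lemma tau_nonneg (hx : x ∈ Ioo (T.a i) (T.b i)) : 0 ≤ T.τ x :=
  le_of_tendsto (T.lim_zero i) <| eventually_of_mem (Ioo_mem_nhdsGT hx.1) fun _ hz =>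
    (T.mono i).le_iff_le ⟨hz.1, hz.2.trans hx.2⟩ hx |>.2 hz.2.le

lemma tendsto_slope_nhdsGT_a (hy : T.a i < y) :
    Tendsto (fun z => slope T.τ z y) (𝓝[>] (T.a i)) (𝓝 (T.τ y / (y - T.a i))) := by
  rw [← sub_zero (T.τ y)]
  exact ((tendsto_const_nhds.sub (T.lim_zero i)).div
    (tendsto_const_nhds.sub (tendsto_id.mono_left nhdsWithin_le_nhds))
    (sub_ne_zero.2 hy.ne')).congr fun z => (slope_def_field _ _ _).symm

lemma slope_le_slope (hz : z ∈ Ioo (T.a i) (T.b i)) (hx : x ∈ Ioo (T.a i) (T.b i))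
    (hy : y ∈ Ioo (T.a i) (T.b i)) (hzx : z < x) (hxy : x < y) :
    slope T.τ z y ≤ slope T.τ x y := by
  rw [slope_comm, slope_comm _ x, slope_def_field, slope_def_field]
  exact (T.conv i).secant_mono hy hz hx (hzx.trans hxy).ne hxy.ne hzx.le

lemma da_le_slope (hx : x ∈ Ioo (T.a i) (T.b i)) (hy : y ∈ Ioo (T.a i) (T.b i)) (hxy : x < y) :
    T.da i ≤ slope T.τ x y :=
  le_of_tendsto (T.deriv_lim i) <| eventually_of_mem (Ioo_mem_nhdsGT hx.1) fun z hz => by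
    have hz' : z ∈ Ioo (T.a i) (T.b i) := ⟨hz.1, hz.2.trans hx.2⟩
    exact ((T.conv i).deriv_le_slope hz' hy (hz.2.trans hxy) (T.diff i z hz')).trans
      (T.slope_le_slope hz' hx hy hz.2 hxy)

lemma div_sub_a_le_slope (hx : x ∈ Ioo (T.a i) (T.b i)) (hy : y ∈ Ioo (T.a i) (T.b i))
    (hxy : x < y) : T.τ y / (y - T.a i) ≤ slope T.τ x y :=
  le_of_tendsto (T.tendsto_slope_nhdsGT_a hy.1) <|
    eventually_of_mem (Ioo_mem_nhdsGT hx.1) fun _ hz =>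
      T.slope_le_slope ⟨hz.1, hz.2.trans hx.2⟩ hx hy hz.2 hxy

lemma mul_div_pow_le_slope_pow {d₀ el m ν : ℝ} (N : ℕ) (hd₀ : ∀ i, d₀ ≤ T.da i) (hm : m < 1)
    (hbad : ∀ i, T.da i < el → m ≤ T.a i) (hνel : ν ≤ el) (hνd₀ : ν ≤ (1 - m)⁻¹ ^ N * d₀)
    (hx : x ∈ Ioo (T.a i) (T.b i)) (hy : y ∈ Ioo (T.a i) (T.b i)) (hxy : x < y) :
    ν * (T.τ y / y) ^ N ≤ slope T.τ x y ^ (N + 1) := by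
  set r := slope T.τ x y
  set q := T.τ y / y
  have ha := T.a_nonneg i
  have hy1 : y ≤ 1 := (T.sub i hy).2
  have hτy : 0 < T.τ y := (T.tau_nonneg hx).trans_lt (T.mono i hx hy hxy)
  have hy0 : 0 < y := ha.trans_lt hy.1
  have hq : 0 < q := div_pos hτy hy0
  have hdar : T.da i ≤ r := T.da_le_slope hx hy hxy
  have hqr : q ≤ r := (div_le_div_of_nonneg_left hτy.le (sub_pos.2 hy.1) (by linarith)).trans
    (T.div_sub_a_le_slope hx hy hxy)
  have hr0 : 0 ≤ r := hq.le.trans hqr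
  rcases le_or_gt el (T.da i) with hgood | hda
  · calc ν * q ^ N ≤ r * r ^ N := by gcongr; exact hνel.trans (hgood.trans hdar)
      _ = r ^ (N + 1) := (pow_succ' r N).symm
  · have hm0 : 0 < 1 - m := by linarith
    have hκq : (1 - m)⁻¹ * q ≤ r := by
      refine le_trans ?_ (T.div_sub_a_le_slope hx hy hxy)
      rw [inv_mul_eq_div, div_div]
      have := hbad i hda
      exact div_le_div_of_nonneg_left hτy.le (sub_pos.2 hy.1) (by nlinarith)
    calc ν * q ^ N ≤ ((1 - m)⁻¹ ^ N * d₀) * q ^ N := by gcongr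
      _ = d₀ * ((1 - m)⁻¹ * q) ^ N := by ring
      _ ≤ r * r ^ N := by gcongr; exact (hd₀ i).trans hdar
      _ = r ^ (N + 1) := (pow_succ' r N).symm

lemma exists_gapPotential_expansion :
    ∃ ν > 1, ∃ N : ℕ, ∀ i, ∀ x ∈ Ioo (T.a i) (T.b i), ∀ y ∈ Ioo (T.a i) (T.b i), x < y →
      ν * gapPotential N x y ≤ gapPotential N (T.τ x) (T.τ y) := by
  obtain ⟨i₀, hi₀⟩ := T.tendsto_da_atTop.exists_forall_le
  obtain ⟨el, hel, m, hm0, hm1, hbad⟩ := T.exists_le_a_of_da_lt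
  have hκ : 1 < (1 - m)⁻¹ := (one_lt_inv₀ (by linarith)).2 (by linarith)
  obtain ⟨N, hN⟩ := pow_unbounded_of_one_lt (T.da i₀)⁻¹ hκ
  have hNd : 1 < (1 - m)⁻¹ ^ N * T.da i₀ := by
    rwa [inv_lt_iff_one_lt_mul₀ (T.da_pos i₀)] at hN
  refine ⟨_, lt_min hel hNd, N, fun i x hx y hy hxy => ?_⟩
  have hy0 : 0 < y := (T.a_nonneg i).trans_lt hy.1
  exact mul_gapPotential_le_of_slope N hxy hy0 ((T.tau_nonneg hx).trans_lt (T.mono i hx hy hxy))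
    (T.mul_div_pow_le_slope_pow N hi₀ hm1 hbad (min_le_left _ _) (min_le_right _ _) hx hy hxy)

end PCT

lemma IsBranchSeq.gapPotential_iterate {T : PCT} {ν : ℝ} {N n : ℕ} {c d u v : ℝ} (hν : 0 ≤ ν)
    (hexp : ∀ i, ∀ x ∈ Ioo (T.a i) (T.b i), ∀ y ∈ Ioo (T.a i) (T.b i), x < y →
      ν * gapPotential N x y ≤ gapPotential N (T.τ x) (T.τ y))
    (hseq : IsBranchSeq T n c d) (hu : u ∈ Ioo c d) (hv : v ∈ Ioo c d) (huv : u < v) :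
    ∀ k ≤ n, T.τ^[k] u < T.τ^[k] v ∧
      ν ^ k * gapPotential N u v ≤ gapPotential N (T.τ^[k] u) (T.τ^[k] v) := by
  intro k hk
  induction k with
  | zero => simpa using huv
  | succ k ih =>
    obtain ⟨hlt, hgrow⟩ := ih (by omega)
    obtain ⟨i, hi⟩ := hseq.2 k (by omega)
    have hx := hi ⟨u, hu, rfl⟩
    have hy := hi ⟨v, hv, rfl⟩
    rw [Function.iterate_succ_apply', Function.iterate_succ_apply']
    refine ⟨T.mono i hx hy hlt, ?_⟩
    calc ν ^ (k + 1) * gapPotential N u v = ν * (ν ^ k * gapPotential N u v) := by ring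
      _ ≤ ν * gapPotential N (T.τ^[k] u) (T.τ^[k] v) := by gcongr
      _ ≤ _ := hexp i _ hx _ hy hlt

lemma PCT.exists_branchSeq_length_bound (T : PCT) :
    ∃ ν > 1, ∃ N : ℕ, ∀ n ≥ 1, ∀ c d,
      IsBranchSeq T n c d → ((d - c) / 2) ^ (N + 1) * ν ^ n ≤ 1 := by
  obtain ⟨ν, hν, N, hexp⟩ := T.exists_gapPotential_expansion
  refine ⟨ν, hν, N, fun n hn c d hseq => ?_⟩
  have hcd := hseq.1
  have hu : c + (d - c) / 4 ∈ Ioo c d := ⟨by linarith, by linarith⟩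
  have hv : d - (d - c) / 4 ∈ Ioo c d := ⟨by linarith, by linarith⟩
  have huv : c + (d - c) / 4 < d - (d - c) / 4 := by linarith
  have hunit : ∀ w ∈ Ioo c d, w ∈ Icc (0 : ℝ) 1 := fun w hw => by
    obtain ⟨i, hi⟩ := hseq.2 0 hn
    exact T.sub i (hi ⟨w, hw, rfl⟩)
  obtain ⟨hlt, hgrow⟩ := hseq.gapPotential_iterate (by linarith) hexp hu hv huv n le_rfl
  calc ((d - c) / 2) ^ (N + 1) * ν ^ n
      = ν ^ n * (d - (d - c) / 4 - (c + (d - c) / 4)) ^ (N + 1) := by ring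
    _ ≤ ν ^ n * gapPotential N (c + (d - c) / 4) (d - (d - c) / 4) := by
        gcongr; exact pow_le_gapPotential N (hunit _ hu).1 huv (hunit _ hv).2
    _ ≤ _ := hgrow
    _ ≤ 1 := gapPotential_le_one N (T.maps_to.iterate n (hunit _ hu)).1 hlt
        (T.maps_to.iterate n (hunit _ hv)).2

/-- Proposition 2.1.9. Let `τ ∈ 𝒯` and let `𝒫⁽ⁿ⁾` be the partition of
`[0,1]` into branch intervals `(aᵢ⁽ⁿ⁾, bᵢ⁽ⁿ⁾)` of `τⁿ`. Then for every `ε > 0` there is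
`n̄ ∈ ℕ` such that for all `n > n̄` every branch interval of `τⁿ` has length `< ε`. -/
theorem branch_intervals_small (T : PCT) (ε : ℝ) (hε : 0 < ε) :
    ∃ nbar : ℕ, ∀ n > nbar, ∀ c d : ℝ, IsBranchInterval T n c d → d - c < ε := by
  obtain ⟨ν, hν, N, hbound⟩ := T.exists_branchSeq_length_bound
  obtain ⟨nbar, hnbar⟩ := ((tendsto_pow_atTop_atTop_of_one_lt hν).eventually_gt_atTop
    ((2 / ε) ^ (N + 1))).exists_forall_of_atTop
  refine ⟨nbar, fun n hn c d hcd => ?_⟩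
  by_contra! hlong
  have hone : (ε / 2) ^ (N + 1) * (2 / ε) ^ (N + 1) = 1 := by
    rw [← mul_pow, div_mul_div_comm, mul_comm ε, div_self (by positivity), one_pow]
  have hlarge : (ε / 2) ^ (N + 1) * (2 / ε) ^ (N + 1) < ((d - c) / 2) ^ (N + 1) * ν ^ n :=
    mul_lt_mul' (by gcongr) (hnbar n hn.le) (by positivity) (pow_pos (by linarith) _)
  linarith [hbound n (by omega) c d hcd.1]
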